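/- Let d>0, p>1, γ>0, φ̄≥0. Define A, B, C by A = 4γd + pγ² + pd² − 2dpγ, B = 2(p−1)[2γd + pφ̄(γ−d)], C = p(p−1)²φ̄², and assume B > 0. Then 2C/B < B/(2A) if and only if γ > pφ̄(d+φ̄)/(d+pφ̄). -/
import Mathlib


theorem stmt_3 (d p γ φ : ℝ) (hd : 0 < d) (hp : 1 < p) (hγ : 0 < γ) (hφ : 0 ≤ φ)
    (A B C : ℝ)
    (hA : A = 4*γ*d + p*γ^2 + p*d^2 - 2*d*p*γ)
    (hB : B = 2*(p-1)*(2*γ*d + p*φ*(γ-d)))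
    (hC : C = p*(p-1)^2*φ^2)
    (hBpos : 0 < B) :
    2*C/B < B/(2*A) ↔ γ > p*φ*(d+φ)/(d+p*φ) := by
  subst hA hB hC
  have hp0 : (0:ℝ) < p := by linarith
  have hApos : (0:ℝ) < 4*γ*d + p*γ^2 + p*d^2 - 2*d*p*γ := by
    nlinarith [sq_nonneg (γ - d), mul_pos hγ hd]
  have hden : (0:ℝ) < d + p*φ := by nlinarith
  have hp1 : (0:ℝ) < p - 1 := by linarith
  have hcoef : (0:ℝ) < 16*(p-1)^2*γ*d := by positivity
  rw [div_lt_div_iff₀ hBpos (by linarith : (0:ℝ) < 2*(4*γ*d + p*γ^2 + p*d^2 - 2*d*p*γ)),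
    gt_iff_lt, div_lt_iff₀ hden]
  constructor
  · intro h
    nlinarith [h, hcoef, mul_pos hγ hd]
  · intro h
    nlinarith [mul_pos hcoef (by linarith : (0:ℝ) < γ*(d+p*φ) - p*φ*(d+φ))]
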